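/- arXiv:1504.01119 — 2 statements merged into one kernel-verified Lean document; each statement's English description precedes it below -/
import Mathlib

section
/- Let T be a tournament on n vertices, 0 < c < 1, and let A₁, T₁ ⊆ V(T) be disjoint with T₁ transitive, |A₁| ≥ cn, |T₁| ≥ c·n^{ε_c}, and every vertex of A₁ adjacent to every vertex of T₁ (or every vertex of T₁ adjacent to every vertex of A₁), where ε_c = log(1−c)/log(c). If the subtournament induced by A₁ contains a transitive subset of size at least |A₁|^{ε_c}, then T contains a transitive subset of size at least n^{ε_c}. -/
open Finset

def IsTournament {V : Type*} (Adj : V → V → Prop) : Prop :=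
  (∀ v, ¬ Adj v v) ∧ ∀ u v : V, u ≠ v → (Adj u v ↔ ¬ Adj v u)

def HasDirCycleIn {V : Type*} (Adj : V → V → Prop) (S : Set V) : Prop :=
  ∃ k : ℕ, 3 ≤ k ∧ ∃ f : ℕ → V, Set.InjOn f (Set.Iio k) ∧ (∀ i < k, f i ∈ S) ∧
    ∀ i < k, Adj (f i) (f ((i + 1) % k))

/-- A set of vertices is transitive if it induces no directed cycle. -/
def TransSet {V : Type*} (Adj : V → V → Prop) (S : Set V) : Prop := ¬ HasDirCycleIn Adj S

open scoped Classical in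
/-- Directed density from `X` to `Y`. -/
noncomputable def dens {V : Type*} (Adj : V → V → Prop) (X Y : Finset V) : ℝ :=
  (((X ×ˢ Y).filter fun p => Adj p.1 p.2).card : ℝ) / ((X.card : ℝ) * (Y.card : ℝ))

theorem IsTournament.asymm {V : Type*} {Adj : V → V → Prop} (hT : IsTournament Adj) {u v : V}
    (huv : Adj u v) : ¬ Adj v u := by
  by_cases h : u = v
  · subst h
    exact hT.1 u
  · exact (hT.2 u v h).mp huv

theorem forall_lt_of_cyclic_step {k : ℕ} {p : ℕ → Prop} (hstep : ∀ j < k, p j → p ((j + 1) % k))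
    {i : ℕ} (hi : i < k) (hpi : p i) : ∀ j < k, p j := by
  have hk : 0 < k := by omega
  have hshift : ∀ m : ℕ, p ((i + m) % k) := by
    intro m
    induction m with
    | zero => rwa [Nat.add_zero, Nat.mod_eq_of_lt hi]
    | succ m ih =>
      have := hstep _ (Nat.mod_lt _ hk) ih
      rwa [Nat.mod_add_mod, add_assoc] at this
  intro j hj
  have := hshift (j + k - i)
  rwa [show i + (j + k - i) = j + k by omega, Nat.add_mod_right, Nat.mod_eq_of_lt hj] at this

/-- A directed cycle that enters `T` can never leave it, as all edges between `S` and `T` point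
into `T`; so it lies entirely in `S` or entirely in `T`. -/
theorem TransSet.union {V : Type*} {Adj : V → V → Prop} (hasymm : ∀ u v, Adj u v → ¬ Adj v u)
    {S T : Set V} (hS : TransSet Adj S) (hT : TransSet Adj T)
    (hST : ∀ v ∈ S, ∀ w ∈ T, Adj v w) : TransSet Adj (S ∪ T) := by
  rintro ⟨k, hk, f, hinj, hmem, hadj⟩
  by_cases hallS : ∀ i < k, f i ∈ S
  · exact hS ⟨k, hk, f, hinj, hallS, hadj⟩
  push Not at hallS
  obtain ⟨i, hi, hiS⟩ := hallS
  have hstep : ∀ j < k, f j ∈ T → f ((j + 1) % k) ∈ T := fun j hj hjT =>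
    (hmem _ (Nat.mod_lt _ (by omega))).resolve_left fun hS' =>
      hasymm _ _ (hadj j hj) (hST _ hS' _ hjT)
  exact hT ⟨k, hk, f, hinj,
    forall_lt_of_cyclic_step hstep hi ((hmem i hi).resolve_left hiS), hadj⟩

theorem saturated_pair_gives_poly_transitive {V : Type*} [Fintype V]
    (Adj : V → V → Prop) (hT : IsTournament Adj) (c εc : ℝ)
    (hc : 0 < c) (hc1 : c < 1)
    (hεc : εc = Real.log (1 - c) / Real.log c)
    (A₁ T₁ : Finset V) (hdisj : Disjoint A₁ T₁) (htr : TransSet Adj ↑T₁)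
    (hA : (A₁.card : ℝ) ≥ c * Fintype.card V)
    (hT₁ : (T₁.card : ℝ) ≥ c * (Fintype.card V : ℝ) ^ εc)
    (hcomp : (∀ v ∈ A₁, ∀ w ∈ T₁, Adj v w) ∨ (∀ w ∈ T₁, ∀ v ∈ A₁, Adj w v))
    (hsub : ∃ S ⊆ A₁, TransSet Adj ↑S ∧ (S.card : ℝ) ≥ (A₁.card : ℝ) ^ εc) :
    ∃ S : Finset V, TransSet Adj ↑S ∧ (S.card : ℝ) ≥ (Fintype.card V : ℝ) ^ εc := by
  classical
  obtain ⟨S, hSA, hStr, hScard⟩ := hsub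
  set n : ℝ := (Fintype.card V : ℝ)
  have hε : 0 ≤ εc := hεc ▸
    (div_pos_of_neg_of_neg (Real.log_neg (by linarith) (by linarith)) (Real.log_neg hc hc1)).le
  -- `εc = logb c (1 - c)`, so `c ^ εc = 1 - c`: the two parts of the union together have `n ^ εc`
  have hcε : c ^ εc = 1 - c := by
    rw [hεc, Real.log_div_log, Real.rpow_logb hc hc1.ne (by linarith)]
  have hS : (1 - c) * n ^ εc ≤ S.card := calc
    (1 - c) * n ^ εc = (c * n) ^ εc := by rw [Real.mul_rpow hc.le (Nat.cast_nonneg _), hcε]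
    _ ≤ (A₁.card : ℝ) ^ εc := Real.rpow_le_rpow (by positivity) hA hε
    _ ≤ S.card := hScard
  refine ⟨S ∪ T₁, ?_, ?_⟩
  · rw [Finset.coe_union]
    rcases hcomp with hAT | hTA
    · exact hStr.union (fun _ _ => hT.asymm) htr fun v hv w hw => hAT v (hSA hv) w hw
    · rw [Set.union_comm]
      exact htr.union (fun _ _ => hT.asymm) hStr fun w hw v hv => hTA w hw v (hSA hv)
  · rw [Finset.card_union_of_disjoint (hdisj.mono_left hSA), Nat.cast_add]
    linarith
end

section
/- Let T be a tournament and A₁,...,A_k pairwise disjoint vertex subsets with |A_i| ≥ cn (n = |T|) and d(A_i,A_j) ≥ 1 − λ for all 1 ≤ i < j ≤ k, where 4λk² < 1. Then there exist subsets A'_i ⊆ A_i with |A'_i| ≥ |A_i|/2 such that for all 1 ≤ i < j ≤ k, every vertex v ∈ A'_i satisfies d({v}, A'_j) ≥ 1 − 4λk and every vertex w ∈ A'_j satisfies d(A'_i, {w}) ≥ 1 − 4λk. -/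
open Finset

/-!
For each ordered pair `i ≠ j` the density hypothesis says that a vertex of `A i` misses on
average at most `λ|A j|` vertices of `A j`; reversing all edges when `i > j` makes the
in-degree condition an instance of the same out-degree condition. By Markov's inequality at most
`|A i|/(2k)` vertices of `A i` miss more than `2λk|A j|` vertices of `A j`, so discarding these
vertices for every `j ≠ i` keeps at least half of `A i`. Since the kept part of `A j` is at
least half of `A j`, a kept vertex of `A i` misses at most `2λk|A j| ≤ 4λk|A' j|` of it.
-/

section FilterCounting

variable {α : Type*}

theorem card_filter_lt_mul_le (s : Finset α) (f : α → ℝ) {a : ℝ} (t : ℝ)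
    (hf : ∀ x ∈ s, 0 ≤ f x) (ha : 0 ≤ a) (hsum : ∑ x ∈ s, f x ≤ a * #s) :
    #{x ∈ s | t * a < f x} * t ≤ #s := by
  set F := {x ∈ s | t * a < f x}
  rcases F.eq_empty_or_nonempty with hF | hF
  · simp [hF]
  have hFs : F ⊆ s := filter_subset _ _
  have : #F * (t * a) < a * #s := calc
    (#F : ℝ) * (t * a) = ∑ _x ∈ F, t * a := by rw [sum_const, nsmul_eq_mul]
    _ < ∑ x ∈ F, f x := sum_lt_sum_of_nonempty hF fun x hx => (mem_filter.mp hx).2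
    _ ≤ ∑ x ∈ s, f x := sum_le_sum_of_subset_of_nonneg hFs fun x hx _ => hf x hx
    _ ≤ a * #s := hsum
  have : a * (#F * t - #s) < 0 := by linarith
  linarith [neg_of_mul_neg_right this ha]

theorem card_le_two_mul_card_filter_forall_ne {ι : Type*} [Fintype ι] [DecidableEq ι]
    {s : Finset α} {P : ι → α → Prop} [∀ j, DecidablePred (P j)] (i : ι)
    (h : ∀ j ≠ i, #{x ∈ s | ¬ P j x} * (2 * Fintype.card ι) ≤ #s) :
    #s ≤ 2 * #{x ∈ s | ∀ j ≠ i, P j x} := by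
  classical
  have hbad :
      {x ∈ s | ¬ ∀ j ≠ i, P j x} = (univ.erase i).biUnion fun j => {x ∈ s | ¬ P j x} := by
    ext x; simp only [mem_filter, mem_biUnion, mem_erase, mem_univ, not_forall]; tauto
  have hk : 0 < Fintype.card ι := Fintype.card_pos_iff.mpr ⟨i⟩
  have : #{x ∈ s | ¬ ∀ j ≠ i, P j x} * (2 * Fintype.card ι) ≤ Fintype.card ι * #s := calc
    _ ≤ (∑ j ∈ univ.erase i, #{x ∈ s | ¬ P j x}) * (2 * Fintype.card ι) := by
      rw [hbad]; gcongr; exact card_biUnion_le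
    _ = ∑ j ∈ univ.erase i, #{x ∈ s | ¬ P j x} * (2 * Fintype.card ι) := sum_mul _ _ _
    _ ≤ #(univ.erase i) * #s := by
      simpa only [smul_eq_mul] using
        sum_le_card_nsmul (univ.erase i) _ _ fun j hj => h j (ne_of_mem_erase hj)
    _ ≤ Fintype.card ι * #s := by gcongr; exact card_le_univ _
  have := card_filter_add_card_filter_not (s := s) (fun x => ∀ j ≠ i, P j x)
  nlinarith

end FilterCounting

section Density

variable {V : Type*} (R : V → V → Prop)

open scoped Classical in
noncomputable def missCount (v : V) (S : Finset V) : ℕ := #{y ∈ S | ¬ R v y}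

theorem dens_flip (X Y : Finset V) : _root_.dens (flip R) Y X = _root_.dens R X Y := by
  classical
  unfold _root_.dens
  rw [mul_comm (#Y : ℝ)]
  congr 2
  exact_mod_cast card_equiv (Equiv.prodComm V V) fun p => by
    rw [mem_filter, mem_filter]
    simp only [mem_product, Equiv.prodComm_apply, Prod.fst_swap, Prod.snd_swap, flip]
    tauto

theorem dens_empty_right (X : Finset V) : _root_.dens R X ∅ = 0 := by
  simp [_root_.dens]

theorem dens_nonneg (X Y : Finset V) : 0 ≤ _root_.dens R X Y := by
  unfold _root_.dens; positivity

theorem dens_singleton_left (v : V) {S : Finset V} (hS : S.Nonempty) :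
    _root_.dens R {v} S = 1 - missCount R v S / #S := by
  classical
  have hcard : #{y ∈ S | R v y} + missCount R v S = #S := card_filter_add_card_filter_not _
  have hedges : #{p ∈ {v} ×ˢ S | R p.1 p.2} = #{y ∈ S | R v y} := by
    rw [singleton_product, filter_map, card_map]; rfl
  have : (0 : ℝ) < #S := by exact_mod_cast hS.card_pos
  unfold _root_.dens
  rw [hedges, card_singleton, Nat.cast_one, one_mul, eq_sub_iff_add_eq, ← add_div,
    ← Nat.cast_add, hcard, div_self this.ne']

theorem missCount_mono (v : V) {S' S : Finset V} (h : S' ⊆ S) :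
    missCount R v S' ≤ missCount R v S := by
  classical
  exact card_le_card (filter_subset_filter _ h)

open scoped Classical in
theorem sum_missCount_add_card_edges (X Y : Finset V) :
    ∑ x ∈ X, missCount R x Y + #{p ∈ X ×ˢ Y | R p.1 p.2} = #X * #Y := by
  rw [card_filter, sum_product, ← sum_add_distrib, ← smul_eq_mul, ← sum_const]
  refine sum_congr rfl fun x _ => ?_
  rw [← card_filter, add_comm]
  exact card_filter_add_card_filter_not _

theorem sum_missCount_le {X Y : Finset V} {lam : ℝ} (h : 1 - lam ≤ _root_.dens R X Y) :
    ∑ x ∈ X, (missCount R x Y : ℝ) ≤ lam * #Y * #X := by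
  classical
  have hsum : ∑ x ∈ X, (missCount R x Y : ℝ) + #{p ∈ X ×ˢ Y | R p.1 p.2} = #X * #Y := by
    exact_mod_cast sum_missCount_add_card_edges R X Y
  rcases (by positivity : (0 : ℝ) ≤ #X * #Y).eq_or_lt with h0 | hpos
  · have hedges : (0 : ℝ) ≤ #{p ∈ X ×ˢ Y | R p.1 p.2} := Nat.cast_nonneg _
    linear_combination hsum + hedges + (lam - 1) * h0
  · unfold _root_.dens at h
    rw [le_div_iff₀ hpos] at h
    linarith

end Density

section SmoothPart

variable {V ι : Type*} [Fintype ι] [DecidableEq ι]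
  (R : ι → ι → V → V → Prop) (A : ι → Finset V) (lam : ℝ)

noncomputable def smoothPart (i : ι) : Finset V :=
  {v ∈ A i | ∀ j ≠ i,
    (missCount (R i j) v (A j) : ℝ) ≤ 2 * Fintype.card ι * (lam * #(A j))}

theorem smoothPart_subset (i : ι) : smoothPart R A lam i ⊆ A i := filter_subset _ _

variable {R A lam}

theorem card_le_two_mul_card_smoothPart (hlam : 0 ≤ lam)
    (hdens : ∀ i j, i ≠ j → 1 - lam ≤ _root_.dens (R i j) (A i) (A j)) (i : ι) :
    #(A i) ≤ 2 * #(smoothPart R A lam i) := by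
  refine card_le_two_mul_card_filter_forall_ne i fun j hj => ?_
  simp only [not_le]
  exact_mod_cast card_filter_lt_mul_le (A i) _ (2 * Fintype.card ι) (fun _ _ => Nat.cast_nonneg _)
    (mul_nonneg hlam (Nat.cast_nonneg _)) (sum_missCount_le _ (hdens i j hj.symm))

theorem le_dens_smoothPart (hlam : 0 ≤ lam)
    (hdens : ∀ i j, i ≠ j → 1 - lam ≤ _root_.dens (R i j) (A i) (A j))
    {i j : ι} (hij : i ≠ j) {v : V} (hv : v ∈ smoothPart R A lam i) :
    1 - 4 * lam * Fintype.card ι ≤ _root_.dens (R i j) {v} (smoothPart R A lam j) := by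
  have hhalf : (#(A j) : ℝ) ≤ 2 * #(smoothPart R A lam j) := by
    exact_mod_cast card_le_two_mul_card_smoothPart hlam hdens j
  rcases (smoothPart R A lam j).eq_empty_or_nonempty with hempty | hne
  -- then `A j = ∅`, so `dens (A i) (A j) = 0` forces `1 ≤ λ` and the bound is vacuous
  · have hAj : A j = ∅ := by simpa [hempty] using hhalf
    have hlam1 : 1 ≤ lam := by
      have := hdens i j hij
      rw [hAj, dens_empty_right] at this
      linarith
    have hk : (1 : ℝ) ≤ Fintype.card ι := by exact_mod_cast Fintype.card_pos_iff.mpr ⟨i⟩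
    calc 1 - 4 * lam * Fintype.card ι ≤ 0 := by nlinarith
      _ ≤ _ := dens_nonneg _ _ _
  · rw [dens_singleton_left _ _ hne, sub_le_sub_iff_left,
      div_le_iff₀ (by exact_mod_cast hne.card_pos)]
    calc (missCount (R i j) v (smoothPart R A lam j) : ℝ)
        ≤ missCount (R i j) v (A j) := by
          exact_mod_cast missCount_mono _ _ (smoothPart_subset _ _ _ j)
      _ ≤ 2 * Fintype.card ι * (lam * #(A j)) := (mem_filter.mp hv).2 j hij.symm
      _ ≤ 4 * lam * Fintype.card ι * #(smoothPart R A lam j) := by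
        have : (0 : ℝ) ≤ 2 * Fintype.card ι * lam := by positivity
        nlinarith

end SmoothPart

theorem make_l_sequence_smooth_general {V : Type*} (Adj : V → V → Prop)
    (k : ℕ) (A : Fin k → Finset V) (lam : ℝ)
    (hlam0 : 0 ≤ lam)
    (hdens : ∀ i j : Fin k, i < j → dens Adj (A i) (A j) ≥ 1 - lam) :
    ∃ A' : Fin k → Finset V, (∀ i, A' i ⊆ A i) ∧
      (∀ i, ((A' i).card : ℝ) ≥ ((A i).card : ℝ) / 2) ∧
      ∀ i j : Fin k, i < j →
        (∀ v ∈ A' i, dens Adj {v} (A' j) ≥ 1 - 4 * lam * k) ∧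
        (∀ w ∈ A' j, dens Adj (A' i) {w} ≥ 1 - 4 * lam * k) := by
  set R : Fin k → Fin k → V → V → Prop := fun i j => if i < j then Adj else flip Adj
  have hdensR : ∀ i j, i ≠ j → 1 - lam ≤ _root_.dens (R i j) (A i) (A j) := by
    intro i j hij
    rcases hij.lt_or_gt with h | h
    · simpa [R, h] using hdens i j h
    · simpa [R, h.not_gt, dens_flip] using hdens j i h
  refine ⟨smoothPart R A lam, smoothPart_subset R A lam, fun i => ?_,
    fun i j hij => ⟨?_, ?_⟩⟩
  · have : (#(A i) : ℝ) ≤ 2 * #(smoothPart R A lam i) := by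
      exact_mod_cast card_le_two_mul_card_smoothPart hlam0 hdensR i
    linarith
  · intro v hv
    simpa [R, hij] using le_dens_smoothPart hlam0 hdensR hij.ne hv
  · intro w hw
    simpa [R, hij.not_gt, dens_flip] using le_dens_smoothPart hlam0 hdensR hij.ne' hw

theorem make_l_sequence_smooth {V : Type*} [Fintype V] (Adj : V → V → Prop)
    (hT : IsTournament Adj) (k : ℕ) (A : Fin k → Finset V) (c lam : ℝ)
    (hc : 0 < c) (hlam0 : 0 ≤ lam)
    (hdisj : ∀ i j, i ≠ j → Disjoint (A i) (A j))
    (hsize : ∀ i, ((A i).card : ℝ) ≥ c * Fintype.card V)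
    (hdens : ∀ i j : Fin k, i < j → dens Adj (A i) (A j) ≥ 1 - lam)
    (hlk : 4 * lam * (k : ℝ) ^ 2 < 1) :
    ∃ A' : Fin k → Finset V, (∀ i, A' i ⊆ A i) ∧
      (∀ i, ((A' i).card : ℝ) ≥ ((A i).card : ℝ) / 2) ∧
      ∀ i j : Fin k, i < j →
        (∀ v ∈ A' i, dens Adj {v} (A' j) ≥ 1 - 4 * lam * k) ∧
        (∀ w ∈ A' j, dens Adj (A' i) {w} ≥ 1 - 4 * lam * k) :=
  make_l_sequence_smooth_general Adj k A lam hlam0 hdens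
end
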